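/- arXiv:2307.03349 — 2 statements merged into one kernel-verified Lean document; each statement's English description precedes it below -/
import Mathlib

section
/- Let (Ω, ν) be a measure space, let ψ_1, …, ψ_N : Ω → ℝ be square-integrable functions satisfying the Kronecker property at points p_1, …, p_N ∈ Ω (i.e., ψ_i(p_i) = 1 and ψ_i(p_j) = 0 for i ≠ j), let M ∈ ℝ^{N×N} with M_{ij} = ∫_Ω ψ_i ψ_j dν be invertible, let P ∈ ℝ^{N×N}, and define Φ_h(y, x) = Σ_{k,l} P_{kl} ψ_k(y) ψ_l(x) and A_{ij} = ∫_Ω ∫_Ω ψ_i(y) Φ_h(y, x) ψ_j(x) dν(x) dν(y). Then the matrix of nodal kernel values satisfies Φ_h(p_i, p_j) = (M⁻¹ A M⁻¹)_{ij} for all i, j. -/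
/-!
Expanding the separable kernel `Φ_h(y, x) = ∑ P_kl ψ_k(y) ψ_l(x)` inside the double integral
defining `A` gives `A = M P M`, while the Kronecker property gives `Φ_h(p_i, p_j) = P_ij`.
Hence `M⁻¹ A M⁻¹ = P` is the matrix of nodal kernel values.
-/

open MeasureTheory Matrix

section SeparableKernel

variable {Ω ι : Type*} [MeasurableSpace Ω] [Fintype ι]

theorem integral_sum_sum_const_mul {κ : Type*} [Fintype κ] {μ : Measure Ω}
    (c : ι → κ → ℝ) {F : ι → κ → Ω → ℝ} (hF : ∀ k l, Integrable (F k l) μ) :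
    ∫ x, ∑ k, ∑ l, c k l * F k l x ∂μ = ∑ k, ∑ l, c k l * ∫ x, F k l x ∂μ := by
  rw [integral_finsetSum _ fun k _ => integrable_finsetSum _ fun l _ => (hF k l).const_mul _]
  refine Finset.sum_congr rfl fun k _ => ?_
  rw [integral_finsetSum _ fun l _ => (hF k l).const_mul _]
  simp only [integral_const_mul]

theorem integral_integral_mul_separable_kernel_mul {μ ν : Measure Ω} (P : Matrix ι ι ℝ)
    (ψ : ι → Ω → ℝ) {f g : Ω → ℝ} (hf : ∀ k, Integrable (fun y => f y * ψ k y) μ)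
    (hg : ∀ l, Integrable (fun x => ψ l x * g x) ν) :
    ∫ y, ∫ x, f y * (∑ k, ∑ l, P k l * ψ k y * ψ l x) * g x ∂ν ∂μ =
      ∑ k, ∑ l, (∫ y, f y * ψ k y ∂μ) * P k l * ∫ x, ψ l x * g x ∂ν := by
  have inner : ∀ y, ∫ x, f y * (∑ k, ∑ l, P k l * ψ k y * ψ l x) * g x ∂ν =
      ∑ k, ∑ l, (P k l * ∫ x, ψ l x * g x ∂ν) * (f y * ψ k y) := by
    intro y
    have expand : ∀ x, f y * (∑ k, ∑ l, P k l * ψ k y * ψ l x) * g x =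
        ∑ k, ∑ l, (P k l * f y * ψ k y) * (ψ l x * g x) := by
      intro x
      simp only [Finset.mul_sum, Finset.sum_mul]
      exact Finset.sum_congr rfl fun k _ => Finset.sum_congr rfl fun l _ => by ring
    simp only [expand]
    rw [integral_sum_sum_const_mul _ fun _ l => hg l]
    exact Finset.sum_congr rfl fun k _ => Finset.sum_congr rfl fun l _ => by ring
  simp only [inner]
  rw [integral_sum_sum_const_mul _ fun k _ => hf k]
  exact Finset.sum_congr rfl fun k _ => Finset.sum_congr rfl fun l _ => by ring

end SeparableKernel

theorem Matrix.mul_mul_apply_eq_sum_sum {l m n o α : Type*} [Fintype m] [Fintype n]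
    [NonUnitalNonAssocSemiring α] (M : Matrix l m α) (P : Matrix m n α) (Q : Matrix n o α)
    (i : l) (j : o) :
    (M * P * Q) i j = ∑ k, ∑ l, M i k * P k l * Q l j := by
  simp only [mul_apply, Finset.sum_mul]
  exact Finset.sum_comm

/-- With basis functions satisfying the Kronecker property at nodes `p`, the
matrix of nodal kernel values satisfies `Φ_h(p_i, p_j) = (M⁻¹ A M⁻¹)_{ij}`. -/
theorem nodal_kernel_values_eq_inv_mass_A_inv_mass
    {Ω : Type*} [MeasurableSpace Ω] (ν : Measure Ω) {N : ℕ}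
    (ψ : Fin N → Ω → ℝ) (hψ : ∀ i, MemLp (ψ i) 2 ν)
    (p : Fin N → Ω)
    (hKron : ∀ i j, ψ i (p j) = if i = j then 1 else 0)
    (M : Matrix (Fin N) (Fin N) ℝ)
    (hM : ∀ i j, M i j = ∫ ω, ψ i ω * ψ j ω ∂ν)
    (hMinv : IsUnit M.det)
    (P : Matrix (Fin N) (Fin N) ℝ)
    (Φh : Ω → Ω → ℝ)
    (hΦh : ∀ y x, Φh y x = ∑ k, ∑ l, P k l * ψ k y * ψ l x)
    (A : Matrix (Fin N) (Fin N) ℝ)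
    (hA : ∀ i j, A i j = ∫ y, ∫ x, ψ i y * Φh y x * ψ j x ∂ν ∂ν) :
    ∀ i j, Φh (p i) (p j) = (M⁻¹ * A * M⁻¹) i j := by
  have hint : ∀ i j, Integrable (fun ω => ψ i ω * ψ j ω) ν :=
    fun i j => (hψ i).integrable_mul (hψ j)
  have hA_eq : A = M * P * M := by
    ext i j
    simp only [hA, hΦh, integral_integral_mul_separable_kernel_mul P ψ (hint i) (hint · j),
      ← hM, Matrix.mul_mul_apply_eq_sum_sum]
  have hP_eq : M⁻¹ * A * M⁻¹ = P := by
    rw [hA_eq, Matrix.mul_assoc M, nonsing_inv_mul_cancel_left _ _ hMinv,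
      mul_nonsing_inv_cancel_right _ _ hMinv]
  intro i j
  simp [hP_eq, hΦh, hKron]
end

section
/- Let A, R ∈ ℝ^{N×N} with A symmetric and R symmetric positive definite. Let u_1, …, u_m ∈ ℝ^N and λ_1, …, λ_m ∈ ℝ with each λ_i < 0 be generalized eigenpairs, A u_i = λ_i (R u_i), that are R-orthonormal: u_iᵀ R u_j = 1 if i = j and 0 otherwise. Define the low-rank update A' := A + Σ_{i=1}^m 2|λ_i| (R u_i)(R u_i)ᵀ. Then: (a) A' is symmetric; (b) A' u_j = |λ_j| (R u_j) for every j = 1, …, m, i.e., the update flips the signs of the negative generalized eigenvalues λ_j to |λ_j|; and (c) for every generalized eigenpair (λ, u) with A u = λ (R u) and uᵀ R u_i = 0 for all i, one still has A' u = λ (R u), i.e., the other generalized eigenpairs are unchanged. -/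
open Matrix

/-- The low-rank update `A' = A + Σᵢ 2|λᵢ| (R uᵢ)(R uᵢ)ᵀ` is symmetric, flips the
signs of the negative generalized eigenvalues `λᵢ` of the pencil `(A, R)` to
`|λᵢ|`, and leaves the remaining generalized eigenpairs unchanged. -/
theorem lowRank_update_flips_negative_generalized_eigenvalues
    {N m : ℕ} (A R : Matrix (Fin N) (Fin N) ℝ)
    (hA : A.IsSymm) (hR : R.PosDef)
    (u : Fin m → Fin N → ℝ) (lam : Fin m → ℝ)
    (hneg : ∀ i, lam i < 0)
    (heig : ∀ i, A *ᵥ u i = lam i • (R *ᵥ u i))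
    (horth : ∀ i j, u i ⬝ᵥ (R *ᵥ u j) = if i = j then 1 else 0)
    (A' : Matrix (Fin N) (Fin N) ℝ)
    (hA' : A' = A + ∑ i, (2 * |lam i|) • vecMulVec (R *ᵥ u i) (R *ᵥ u i)) :
    A'.IsSymm ∧
      (∀ j, A' *ᵥ u j = |lam j| • (R *ᵥ u j)) ∧
      (∀ (l : ℝ) (v : Fin N → ℝ), A *ᵥ v = l • (R *ᵥ v) →
        (∀ i, v ⬝ᵥ (R *ᵥ u i) = 0) → A' *ᵥ v = l • (R *ᵥ v)) := by
  subst hA'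
  have hmul : ∀ (c : ℝ) (w v : Fin N → ℝ),
      (c • vecMulVec w w) *ᵥ v = (c * (w ⬝ᵥ v)) • w := by
    intro c w v
    ext k
    simp [vecMulVec, mulVec, dotProduct, Finset.mul_sum, mul_assoc, mul_comm, mul_left_comm]
  have hsumMul : ∀ (M : Fin m → Matrix (Fin N) (Fin N) ℝ) (v : Fin N → ℝ),
      (∑ i, M i) *ᵥ v = ∑ i, (M i) *ᵥ v := by
    intro M v
    ext k
    simp only [mulVec, dotProduct, Matrix.sum_apply, Finset.sum_mul, Finset.sum_apply]
    rw [Finset.sum_comm]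
  refine ⟨?_, ?_, ?_⟩
  · unfold Matrix.IsSymm
    rw [transpose_add, transpose_sum, hA]
    congr 1
    refine Finset.sum_congr rfl fun i _ => ?_
    rw [transpose_smul]
    congr 1
    ext a b
    simp [vecMulVec_apply, transpose_apply, mul_comm]
  · intro j
    rw [add_mulVec, hsumMul]
    have hsum : ∑ i, ((2 * |lam i|) • vecMulVec (R *ᵥ u i) (R *ᵥ u i)) *ᵥ u j
        = (2 * |lam j|) • (R *ᵥ u j) := by
      rw [Finset.sum_eq_single j]
      · rw [hmul]
        have : (R *ᵥ u j) ⬝ᵥ u j = 1 := by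
          rw [dotProduct_comm, horth]; simp
        rw [this, mul_one]
      · intro i _ hij
        rw [hmul]
        have : (R *ᵥ u i) ⬝ᵥ u j = 0 := by
          rw [dotProduct_comm, horth]; simp [hij.symm]
        rw [this, mul_zero, zero_smul]
      · simp
    rw [hsum, heig j, ← add_smul]
    congr 1
    have := hneg j
    rw [abs_of_neg this]
    ring
  · intro l v hv hor
    rw [add_mulVec, hsumMul]
    have hsum : ∑ i, ((2 * |lam i|) • vecMulVec (R *ᵥ u i) (R *ᵥ u i)) *ᵥ v = 0 := by
      refine Finset.sum_eq_zero fun i _ => ?_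
      rw [hmul]
      have : (R *ᵥ u i) ⬝ᵥ v = 0 := by rw [dotProduct_comm]; exact hor i
      rw [this, mul_zero, zero_smul]
    rw [hsum, hv, add_zero]
end
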